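/- Let n ∈ ℕ, N = 2^n, let G be the n-fold Kronecker power over 𝔽₂ of the kernel [[1,0],[1,1]], and let Q ⊆ {0,…,n−1} be a set of bit positions. For all j, c ∈ {0,…,N−1} such that the q-th binary digit of c is 1 for every q ∈ Q: if some q ∈ Q has the q-th binary digit of j equal to 0, then G[j,c] = 0; and if every q ∈ Q has the q-th binary digit of j equal to 1, then G[j,c] = G[j, c − Σ_{q∈Q} 2^q]. -/
import Mathlib


open Finset

/-- The polar kernel `G₂ = [[1,0],[1,1]]` over `𝔽₂`. -/
def polarKernel : Matrix (Fin 2) (Fin 2) (ZMod 2) := !![1, 0; 1, 1]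

/-- The `n`-fold Kronecker power of the polar kernel, an `N × N` matrix over `𝔽₂`
with `N = 2 ^ n`, rows and columns indexed by `0, …, N-1`. -/
def polarG : (n : ℕ) → Matrix (Fin (2 ^ n)) (Fin (2 ^ n)) (ZMod 2)
  | 0 => 1
  | n + 1 =>
    Matrix.reindex (finCongr (by ring)) (finCongr (by ring))
      (Matrix.reindex finProdFinEquiv finProdFinEquiv
        (Matrix.kroneckerMap (· * ·) polarKernel (polarG n)))

/-- Row `g_t` of the polar matrix, as a vector in `𝔽₂^N`. -/
def row (n : ℕ) (t : Fin (2 ^ n)) : Fin (2 ^ n) → ZMod 2 := fun c => polarG n t c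

/-- Hamming weight `i₁(v)`: the number of nonzero coordinates of `v`. -/
def hammingWeight {N : ℕ} (v : Fin N → ZMod 2) : ℕ :=
  (Finset.univ.filter fun c => v c ≠ 0).card

/-- `popcount j`: the number of ones in the binary representation of `j`. -/
def popcount (j : ℕ) : ℕ := (Nat.bits j).count true


lemma testBit_sub_pow {c a : ℕ} (h : c.testBit a = true) (ℓ : ℕ) :
    (c - 2 ^ a).testBit ℓ = if ℓ = a then false else c.testBit ℓ := by
  set r := c % 2 ^ (a + 1) with hr
  set q := c / 2 ^ (a + 1) with hq
  have hc : c = 2 ^ (a + 1) * q + r := (Nat.div_add_mod c (2 ^ (a + 1))).symm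
  have hrlt : r < 2 ^ (a + 1) := Nat.mod_lt _ (by positivity)
  have hra : r.testBit a = true := by
    rw [hr, Nat.testBit_mod_two_pow]; simp [h]
  have hge : 2 ^ a ≤ r := Nat.ge_two_pow_of_testBit hra
  set s := r - 2 ^ a with hs
  have hrs : r = 2 ^ a + s := by omega
  have hslt : s < 2 ^ a := by
    by_contra hcon
    have h1 : 2 ^ (a + 1) ≤ r := by rw [pow_succ]; omega
    omega
  have hslt' : s < 2 ^ (a + 1) := lt_trans hslt (Nat.pow_lt_pow_succ one_lt_two)
  have hsub : c - 2 ^ a = 2 ^ (a + 1) * q + s := by omega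
  have lhs : (c - 2 ^ a).testBit ℓ =
      if ℓ < a + 1 then s.testBit ℓ else q.testBit (ℓ - (a + 1)) := by
    rw [hsub]; exact Nat.testBit_two_pow_mul_add q hslt' ℓ
  have rhs : c.testBit ℓ =
      if ℓ < a + 1 then r.testBit ℓ else q.testBit (ℓ - (a + 1)) := by
    conv_lhs => rw [hc]
    exact Nat.testBit_two_pow_mul_add q hrlt ℓ
  rw [lhs, rhs]
  rcases lt_trichotomy ℓ a with hl | hl | hl
  · have h1 : ℓ < a + 1 := by omega
    have h2 : ℓ ≠ a := hl.ne
    rw [if_pos h1, if_pos h1, if_neg h2, hrs, Nat.testBit_two_pow_add_gt hl]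
  · subst hl
    have h1 : ℓ < ℓ + 1 := Nat.lt_succ_self ℓ
    rw [if_pos h1, if_pos rfl]
    exact Nat.testBit_lt_two_pow hslt
  · have h1 : ¬ ℓ < a + 1 := by omega
    have h2 : ℓ ≠ a := hl.ne'
    rw [if_neg h1, if_neg h1, if_neg h2]

lemma testBit_sub_sum (Q : Finset ℕ) : ∀ (c : ℕ), (∀ q ∈ Q, c.testBit q = true) →
    ∀ ℓ, (c - ∑ q ∈ Q, 2 ^ q).testBit ℓ = if ℓ ∈ Q then false else c.testBit ℓ := by
  induction Q using Finset.induction_on with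
  | empty => intro c _ ℓ; simp
  | @insert a Q' ha ih =>
    intro c hc ℓ
    have hca : c.testBit a = true := hc a (Finset.mem_insert_self a Q')
    have hstep : ∀ q ∈ Q', (c - 2 ^ a).testBit q = true := by
      intro q hq
      rw [testBit_sub_pow hca q, if_neg (fun h : q = a => ha (h ▸ hq))]
      exact hc q (Finset.mem_insert_of_mem hq)
    have hsum : (∑ q ∈ insert a Q', 2 ^ q) = 2 ^ a + ∑ q ∈ Q', 2 ^ q :=
      Finset.sum_insert ha
    rw [hsum, ← Nat.sub_sub, ih (c - 2 ^ a) hstep ℓ]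
    by_cases hl : ℓ ∈ Q'
    · rw [if_pos hl, if_pos (Finset.mem_insert_of_mem hl)]
    · rw [if_neg hl, testBit_sub_pow hca ℓ]
      by_cases hla : ℓ = a
      · rw [if_pos hla, if_pos (hla ▸ Finset.mem_insert_self a Q')]
      · rw [if_neg hla, if_neg (by simp [Finset.mem_insert, hla, hl])]

lemma polarKernel_apply (a b : Fin 2) :
    polarKernel a b = if ((b : ℕ) = 1 → (a : ℕ) = 1) then 1 else 0 := by
  fin_cases a <;> fin_cases b <;> simp [polarKernel]

lemma polarG_apply (n : ℕ) (j c : Fin (2 ^ n)) :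
    polarG n j c =
      if ∀ ℓ < n, ((c : ℕ).testBit ℓ = true → (j : ℕ).testBit ℓ = true) then 1 else 0 := by
  induction n with
  | zero =>
    have hj : j = c := by ext; omega
    rw [hj, if_pos (by omega)]
    show (1 : Matrix (Fin 1) (Fin 1) (ZMod 2)) c c = 1
    simp
  | succ n ih =>
    show (Matrix.reindex (finCongr (by ring)) (finCongr (by ring))
      (Matrix.reindex finProdFinEquiv finProdFinEquiv
        (Matrix.kroneckerMap (· * ·) polarKernel (polarG n)))) j c = _
    rw [Matrix.reindex_apply, Matrix.reindex_apply, Matrix.submatrix_apply,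
      Matrix.submatrix_apply, Matrix.kroneckerMap_apply]
    have hdivj : ((((finCongr (show 2 * 2 ^ n = 2 ^ (n+1) by ring)).symm j).divNat : Fin 2) : ℕ)
        = (j : ℕ) / 2 ^ n := by rw [Fin.coe_divNat]; rfl
    have hdivc : ((((finCongr (show 2 * 2 ^ n = 2 ^ (n+1) by ring)).symm c).divNat : Fin 2) : ℕ)
        = (c : ℕ) / 2 ^ n := by rw [Fin.coe_divNat]; rfl
    have hmodj : ((((finCongr (show 2 * 2 ^ n = 2 ^ (n+1) by ring)).symm j).modNat) : ℕ)
        = (j : ℕ) % 2 ^ n := by rw [Fin.coe_modNat]; rfl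
    have hmodc : ((((finCongr (show 2 * 2 ^ n = 2 ^ (n+1) by ring)).symm c).modNat) : ℕ)
        = (c : ℕ) % 2 ^ n := by rw [Fin.coe_modNat]; rfl
    rw [polarKernel_apply, ih]
    have hbitj : ∀ (x : Fin (2 ^ (n+1))), (x : ℕ).testBit n = decide ((x : ℕ) / 2 ^ n = 1) := by
      intro x
      have hlt : (x : ℕ) / 2 ^ n < 2 := by
        have h1 := x.isLt
        have h2 : (2:ℕ) ^ (n + 1) = 2 ^ n * 2 := by ring
        rw [Nat.div_lt_iff_lt_mul (show 0 < 2 ^ n by positivity)]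
        omega
      rw [Nat.testBit_eq_decide_div_mod_eq, Nat.mod_eq_of_lt hlt]
    have hbitmod : ∀ (x : Fin (2 ^ (n+1))) (ℓ : ℕ), ℓ < n →
        ((x : ℕ) % 2 ^ n).testBit ℓ = (x : ℕ).testBit ℓ := by
      intro x ℓ hℓ
      rw [Nat.testBit_mod_two_pow, decide_eq_true hℓ, Bool.true_and]
    simp only [finProdFinEquiv_symm_apply]
    simp only [hdivj, hdivc, hmodj, hmodc]
    have hsplit : (∀ ℓ < n + 1, ((c : ℕ).testBit ℓ = true → (j : ℕ).testBit ℓ = true)) ↔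
        (((c : ℕ) / 2 ^ n = 1 → (j : ℕ) / 2 ^ n = 1) ∧
          (∀ ℓ < n, (((c : ℕ) % 2 ^ n).testBit ℓ = true → ((j : ℕ) % 2 ^ n).testBit ℓ = true))) := by
      constructor
      · intro H
        refine ⟨fun hc1 => ?_, fun ℓ hℓ hcl => ?_⟩
        · have := H n (Nat.lt_succ_self n)
          rw [hbitj c, hbitj j] at this
          simpa [hc1] using this
        · rw [hbitmod j ℓ hℓ]
          exact H ℓ (by omega) (by rwa [hbitmod c ℓ hℓ] at hcl)
      · rintro ⟨H1, H2⟩ ℓ hℓ hcl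
        rcases Nat.lt_succ_iff_lt_or_eq.mp hℓ with hℓ | rfl
        · have := H2 ℓ hℓ (by rwa [hbitmod c ℓ hℓ])
          rwa [hbitmod j ℓ hℓ] at this
        · rw [hbitj j, decide_eq_true_eq]
          rw [hbitj c, decide_eq_true_eq] at hcl
          exact H1 hcl
    split_ifs with h1 h2 h3 <;> simp_all

/-- multi-position projection property of the polar matrix entries. -/
theorem polar_entry_projection_multi (n : ℕ) (Q : Finset ℕ) (hQ : ∀ q ∈ Q, q < n)
    (j c : Fin (2 ^ n)) (hc : ∀ q ∈ Q, (c : ℕ).testBit q = true) :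
    ((∃ q ∈ Q, (j : ℕ).testBit q = false) → polarG n j c = 0) ∧
    ((∀ q ∈ Q, (j : ℕ).testBit q = true) →
      polarG n j c =
        polarG n j ⟨(c : ℕ) - ∑ q ∈ Q, 2 ^ q,
          lt_of_le_of_lt (Nat.sub_le _ _) c.isLt⟩) := by
  constructor
  · rintro ⟨q, hqQ, hjq⟩
    rw [polarG_apply, if_neg]
    intro H
    have := H q (hQ q hqQ) (hc q hqQ)
    rw [hjq] at this
    exact Bool.false_ne_true this
  · intro hj
    rw [polarG_apply, polarG_apply]
    have hbits := testBit_sub_sum Q c hc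
    congr 1
    apply propext
    constructor
    · intro H ℓ hℓ hcl
      rw [hbits ℓ] at hcl
      by_cases hq : ℓ ∈ Q
      · rw [if_pos hq] at hcl; exact absurd hcl Bool.false_ne_true
      · rw [if_neg hq] at hcl; exact H ℓ hℓ hcl
    · intro H ℓ hℓ hcl
      by_cases hq : ℓ ∈ Q
      · exact hj ℓ hq
      · exact H ℓ hℓ (by rw [hbits ℓ, if_neg hq]; exact hcl)
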